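/- If the principle D_u holds, then Split has no winning strategy in the stationary set splitting game SG. -/

import Mathlib

/-!
Under `D_u` Unsplit even has a winning strategy: accept `α` exactly when `σ α` guesses the
`A`-side played so far, `A ∩ α = σ α`. The accepted set is then the set of guesses of `A`, which is
stationary by `◊`. If Split kept both sides stationary, the club given by `D_u` for `A` would
contain a guess in `B`, hence outside `A`, and a guess in `A`, refuting both alternatives. Since
any two strategies can be played against each other, Split then has no winning strategy.
-/

noncomputable section

/-- The first uncountable ordinal. -/
def omega1 : Ordinal := (Cardinal.aleph 1).ord

/-- `C ⊆ ω₁` is club: unbounded in `ω₁` and closed (every limit `α < ω₁` with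
`sup (C ∩ α) = α` belongs to `C`). -/
def IsClubSet (C : Set Ordinal) : Prop :=
  C ⊆ Set.Iio omega1 ∧
  (∀ α < omega1, ∃ β ∈ C, α < β) ∧
  (∀ α < omega1, Order.IsSuccLimit α → sSup (C ∩ Set.Iio α) = α → α ∈ C)

/-- `S ⊆ ω₁` is stationary: it meets every club subset of `ω₁`. -/
def IsStat (S : Set Ordinal) : Prop :=
  S ⊆ Set.Iio omega1 ∧ ∀ C, IsClubSet C → (S ∩ C).Nonempty

/-- A run of the stationary set splitting game `SG`, coded by a pair of
disjoint subsets `A, B` of `ω₁` (the accepted set is `E = A ∪ B`). -/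
def SGRun (A B : Set Ordinal) : Prop :=
  A ⊆ Set.Iio omega1 ∧ B ⊆ Set.Iio omega1 ∧ Disjoint A B

/-- Split wins the run `(A, B)` if `A ∪ B` is nonstationary or both `A` and `B`
are stationary. -/
def SplitWins (A B : Set Ordinal) : Prop :=
  ¬ IsStat (A ∪ B) ∨ (IsStat A ∧ IsStat B)

/-- The run `(A, B)` is played according to Split's strategy `τ`
(`true` = put into `A`): for every accepted `α`, `α ∈ A` iff `τ` says so on the
position `(A ∩ α, B ∩ α)`. -/
def PlayedBySplit (τ : Ordinal → Set Ordinal → Set Ordinal → Bool)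
    (A B : Set Ordinal) : Prop :=
  ∀ α ∈ A ∪ B, (α ∈ A ↔ τ α (A ∩ Set.Iio α) (B ∩ Set.Iio α) = true)

/-- `τ` is a winning strategy for Split. -/
def SplitWinning (τ : Ordinal → Set Ordinal → Set Ordinal → Bool) : Prop :=
  ∀ A B, SGRun A B → PlayedBySplit τ A B → SplitWins A B

/-- The run `(A, B)` is played according to Unsplit's strategy `υ`
(`true` = accept): for every `α < ω₁`, `α` is accepted iff `υ` says so on the
position `(A ∩ α, B ∩ α)`. -/
def PlayedByUnsplit (υ : Ordinal → Set Ordinal → Set Ordinal → Bool)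
    (A B : Set Ordinal) : Prop :=
  ∀ α < omega1, (α ∈ A ∪ B ↔ υ α (A ∩ Set.Iio α) (B ∩ Set.Iio α) = true)

/-- `υ` is a winning strategy for Unsplit. -/
def UnsplitWinning (υ : Ordinal → Set Ordinal → Set Ordinal → Bool) : Prop :=
  ∀ A B, SGRun A B → PlayedByUnsplit υ A B → ¬ SplitWins A B

/-- A set of ordinals has order type `ω`. -/
def OTypeOmega (s : Set Ordinal) : Prop :=
  Ordinal.type ((· < ·) : s → s → Prop) = Ordinal.omega0

/-- The family `⟨a α β : β < γ α⟩` (for `α < ω₁` limit) witnesses `C_s`: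
each `a α β` is a cofinal subset of `α` of order type `ω`; the family is
`⊆`-decreasing mod finite in `β`; and for every club `C` and stationary `E`
some `a α β` with `α ∈ E` has `a α β \ C` finite and `a α β ∩ E` infinite. -/
def CsWitness (γ : Ordinal → Ordinal) (a : Ordinal → Ordinal → Set Ordinal) : Prop :=
  (∀ α, α < omega1 → Order.IsSuccLimit α →
    γ α < omega1 ∧
    ∀ β < γ α, a α β ⊆ Set.Iio α ∧ (∀ ξ < α, ∃ η ∈ a α β, ξ < η) ∧ OTypeOmega (a α β)) ∧
  (∀ α, α < omega1 → Order.IsSuccLimit α → ∀ β β', β < β' → β' < γ α → (a α β' \ a α β).Finite) ∧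
  (∀ C E : Set Ordinal, IsClubSet C → IsStat E →
    ∃ α β, α < omega1 ∧ Order.IsSuccLimit α ∧ α ∈ E ∧ β < γ α ∧
      (a α β \ C).Finite ∧ (a α β ∩ E).Infinite)

/-- The principle `C_s`. -/
def Cs : Prop :=
  ∃ (γ : Ordinal.{0} → Ordinal.{0}) (a : Ordinal.{0} → Ordinal.{0} → Set Ordinal.{0}), CsWitness γ a

/-- The sequence `⟨σ α : α < ω₁⟩` witnesses `D_u`: it is a `◊`-sequence, and
for every `E ⊆ ω₁` there is a club `C` such that either every `α ∈ C` guessing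
`E` lies in `E`, or every `α ∈ C` guessing `E` lies outside `E`. -/
def DuWitness (σ : Ordinal → Set Ordinal) : Prop :=
  (∀ α < omega1, σ α ⊆ Set.Iio α) ∧
  (∀ A : Set Ordinal, A ⊆ Set.Iio omega1 →
    IsStat {α | α < omega1 ∧ A ∩ Set.Iio α = σ α}) ∧
  (∀ E : Set Ordinal, E ⊆ Set.Iio omega1 →
    ∃ C, IsClubSet C ∧
      ((∀ α ∈ C, E ∩ Set.Iio α = σ α → α ∈ E) ∨
       (∀ α ∈ C, E ∩ Set.Iio α = σ α → α ∉ E)))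

/-- The principle `D_u`. -/
def Du : Prop := ∃ σ : Ordinal.{0} → Set Ordinal.{0}, DuWitness σ

universe u

open Set

theorem exists_sets_forall_mem_iff {ι : Type*} [Preorder ι] [WellFoundedLT ι]
    (P Q : ι → Set ι → Set ι → Prop) :
    ∃ A B : Set ι, ∀ i,
      (i ∈ A ↔ P i (A ∩ Iio i) (B ∩ Iio i)) ∧ (i ∈ B ↔ Q i (A ∩ Iio i) (B ∩ Iio i)) := by
  let F : ∀ i, (∀ j, j < i → Prop × Prop) → Prop × Prop := fun i rec =>
    (P i {j | ∃ h, (rec j h).1} {j | ∃ h, (rec j h).2},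
      Q i {j | ∃ h, (rec j h).1} {j | ∃ h, (rec j h).2})
  let f := wellFounded_lt.fix F
  have segment (i : ι) (p : Prop × Prop → Prop) :
      {j | ∃ _ : j < i, p (f j)} = {j | p (f j)} ∩ Iio i := by
    ext j
    simp [and_comm]
  refine ⟨{i | (f i).1}, {i | (f i).2}, fun i => ?_⟩
  simp only [mem_ofPred_eq, f, wellFounded_lt.fix_eq F i, F]
  rw [segment i Prod.fst, segment i Prod.snd]
  exact ⟨Iff.rfl, Iff.rfl⟩

theorem exists_run_playedByUnsplit_playedBySplit
    (υ τ : Ordinal.{u} → Set Ordinal.{u} → Set Ordinal.{u} → Bool) :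
    ∃ A B, SGRun A B ∧ PlayedByUnsplit υ A B ∧ PlayedBySplit τ A B := by
  obtain ⟨A, B, hAB⟩ := exists_sets_forall_mem_iff
    (fun α S T => α < omega1 ∧ υ α S T = true ∧ τ α S T = true)
    (fun α S T => α < omega1 ∧ υ α S T = true ∧ τ α S T = false)
  have hA α := (hAB α).1
  have hB α := (hAB α).2
  refine ⟨A, B, ⟨fun α hα => ((hA α).1 hα).1, fun α hα => ((hB α).1 hα).1, ?_⟩, ?_, ?_⟩
  · refine disjoint_left.2 fun α hαA hαB => Bool.false_ne_true ?_
    exact ((hB α).1 hαB).2.2.symm.trans ((hA α).1 hαA).2.2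
  · intro α hα
    refine ⟨?_, fun hυα => ?_⟩
    · rintro (hαA | hαB)
      exacts [((hA α).1 hαA).2.1, ((hB α).1 hαB).2.1]
    · cases hτα : τ α (A ∩ Iio α) (B ∩ Iio α)
      exacts [Or.inr ((hB α).2 ⟨hα, hυα, hτα⟩), Or.inl ((hA α).2 ⟨hα, hυα, hτα⟩)]
  · rintro α (hαA | hαB)
    · exact iff_of_true hαA ((hA α).1 hαA).2.2
    · have hτα := ((hB α).1 hαB).2.2
      refine iff_of_false (fun hαA => ?_) (by simp [hτα])
      exact Bool.false_ne_true (hτα.symm.trans ((hA α).1 hαA).2.2)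

theorem not_splitWinning_of_unsplitWinning
    {υ : Ordinal.{u} → Set Ordinal.{u} → Set Ordinal.{u} → Bool}
    (hυ : UnsplitWinning υ) (τ : Ordinal.{u} → Set Ordinal.{u} → Set Ordinal.{u} → Bool) :
    ¬ SplitWinning τ := fun hτ => by
  obtain ⟨A, B, hrun, hυAB, hτAB⟩ := exists_run_playedByUnsplit_playedBySplit υ τ
  exact hυ A B hrun hυAB (hτ A B hrun hτAB)

open Classical in
def guessStrategy (σ : Ordinal.{u} → Set Ordinal.{u}) :
    Ordinal.{u} → Set Ordinal.{u} → Set Ordinal.{u} → Bool :=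
  fun α A _ => decide (A = σ α)

theorem unsplitWinning_guessStrategy {σ : Ordinal.{u} → Set Ordinal.{u}} (hσ : DuWitness σ) :
    UnsplitWinning (guessStrategy σ) := by
  rintro A B ⟨hA, hB, hAB⟩ hplay hwin
  have hguesses : A ∪ B = {α | α < omega1 ∧ A ∩ Iio α = σ α} := by
    ext α
    refine ⟨fun hα => ?_, fun ⟨hα, hguess⟩ => (hplay α hα).2 (decide_eq_true hguess)⟩
    have hα1 : α < omega1 := hα.elim (hA ·) (hB ·)
    exact ⟨hα1, of_decide_eq_true ((hplay α hα1).1 hα)⟩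
  have hstat : IsStat (A ∪ B) := hguesses ▸ hσ.2.1 A hA
  obtain ⟨hAstat, hBstat⟩ := hwin.resolve_left (not_not_intro hstat)
  obtain ⟨C, hC, hin | hout⟩ := hσ.2.2 A hA
  · obtain ⟨α, hαB, hαC⟩ := hBstat.2 C hC
    have hguess : α ∈ A ∪ B := Or.inr hαB
    rw [hguesses] at hguess
    exact disjoint_left.1 hAB (hin α hαC hguess.2) hαB
  · obtain ⟨α, hαA, hαC⟩ := hAstat.2 C hC
    have hguess : α ∈ A ∪ B := Or.inl hαA
    rw [hguesses] at hguess
    exact hout α hαC hguess.2 hαA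

/-- If the principle `D_u` holds, then Split has no winning strategy in the
stationary set splitting game `SG`. -/
theorem du_implies_split_has_no_winning_strategy (h : Du) :
    ¬ ∃ τ : Ordinal.{0} → Set Ordinal.{0} → Set Ordinal.{0} → Bool, SplitWinning τ := by
  obtain ⟨σ, hσ⟩ := h
  rintro ⟨τ, hτ⟩
  exact not_splitWinning_of_unsplitWinning (unsplitWinning_guessStrategy hσ) τ hτ

end
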